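/- arXiv:1909.08601 — 2 statements merged into one kernel-verified Lean document; each statement's English description precedes it below -/
import Mathlib

section
/- For the scalar system x(t+1) = x(t) + w(t) + u(t) with x(0) = 0, where the controller has delayed access to disturbances — u(t) may depend only on w(0), …, w(t−T−1) for a fixed delay T ≥ 1 — the worst-case error sup_{‖w‖_∞ ≤ 1} ‖x‖_∞ is at least T: for any such causal delayed controller there exists an admissible disturbance making sup_t |x(t)| ≥ T. -/
/-!
Up to time `T` the controller has seen no disturbance, so `x(T)` is the sum of the disturbances
plus the number `x⁰(T)` produced by the zero disturbance. The constant disturbance carrying the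
sign of `x⁰(T)` then pushes `|x(T)|` to at least `T`.
-/

/-- Closed-loop trajectory: `x(0)=0`, `x(t+1)=x(t)+w(t)+u(t)` where the control
`u(t) = K t (w(0),…,w(t−T−1))` has delayed access to the disturbance. -/
def trajCtrl (T : ℕ) (K : (t : ℕ) → (Fin (t - T) → ℝ) → ℝ) (w : ℕ → ℝ) : ℕ → ℝ
  | 0 => 0
  | t + 1 => trajCtrl T K w t + w t + K t (fun i => w i)

theorem trajCtrl_eq_sum_add_trajCtrl_zero_of_le {T : ℕ}
    (K : (t : ℕ) → (Fin (t - T) → ℝ) → ℝ) (w : ℕ → ℝ) {n : ℕ} (hn : n ≤ T) :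
    trajCtrl T K w n = ∑ t ∈ Finset.range n, w t + trajCtrl T K 0 n := by
  induction n with
  | zero => simp [trajCtrl]
  | succ n ih =>
    have : IsEmpty (Fin (n - T)) := by rw [Nat.sub_eq_zero_of_le (by omega)]; infer_instance
    have hK : K n (fun i => w i) = K n (fun i => (0 : ℕ → ℝ) i) :=
      congrArg _ (Subsingleton.elim _ _)
    rw [trajCtrl, trajCtrl, ih (by omega), hK, Finset.sum_range_succ, Pi.zero_apply]
    ring

theorem exists_abs_le_one_le_abs_mul_add (a b : ℝ) (ha : 0 ≤ a) :
    ∃ σ : ℝ, |σ| ≤ 1 ∧ a ≤ |σ * a + b| := by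
  rcases le_total 0 b with hb | hb
  · exact ⟨1, by norm_num, by rw [abs_of_nonneg (by linarith)]; linarith⟩
  · exact ⟨-1, by norm_num, by rw [abs_of_nonpos (by linarith)]; linarith⟩

theorem delay_error_lower_bound_general (T : ℕ)
    (K : (t : ℕ) → (Fin (t - T) → ℝ) → ℝ) :
    ∃ w : ℕ → ℝ, (∀ t, |w t| ≤ 1) ∧ ∃ t, (T : ℝ) ≤ |trajCtrl T K w t| := by
  obtain ⟨σ, hσ, hx⟩ := exists_abs_le_one_le_abs_mul_add T (trajCtrl T K 0 T) T.cast_nonneg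
  refine ⟨fun _ => σ, fun _ => hσ, T, ?_⟩
  rw [trajCtrl_eq_sum_add_trajCtrl_zero_of_le K _ le_rfl]
  simpa [mul_comm] using hx

/-- Any controller with delay `T ≥ 1` suffers worst-case error at least `T`:
there is an admissible disturbance driving the state to magnitude `≥ T`. -/
theorem delay_error_lower_bound (T : ℕ) (hT : 1 ≤ T)
    (K : (t : ℕ) → (Fin (t - T) → ℝ) → ℝ) :
    ∃ w : ℕ → ℝ, (∀ t, |w t| ≤ 1) ∧ ∃ t, (T : ℝ) ≤ |trajCtrl T K w t| :=
  delay_error_lower_bound_general T K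
end

section
/- Consider the scalar system x(t+1) = x(t) + w(t) + u(t) with x(0) = 0 and |w(t)| ≤ 1, where at each step the control is u(t) = −Q(x(t) + w(t)), with Q a uniform quantizer with 2^R levels on [−M, M], where M = 1 + c and c = M·2^{−R}. Then c = 2^{−R}/(1 − 2^{−R}) = (2^R − 1)⁻¹, and |x(t)| ≤ (2^R − 1)⁻¹ for all t. -/
/-- Closed-loop invariance under quantized control: with `c = (2^R - 1)⁻¹`,
`M = 1 + c`, a uniform `R`-bit quantizer `Q` on `[-M, M]` with error `≤ c`
(indeed `c = M·2^{-R}`), and control `u(t) = -Q(x(t)+w(t))`, the state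
satisfies `|x(t)| ≤ c` for all `t`. -/
theorem quantized_control_invariance (R : ℕ) (hR : 1 ≤ R)
    (c M : ℝ) (hc : c = ((2 : ℝ) ^ R - 1)⁻¹) (hM : M = 1 + c)
    (Q : ℝ → ℝ) (hQ : ∀ v ∈ Set.Icc (-M) M, |v - Q v| ≤ c)
    (w : ℕ → ℝ) (hw : ∀ t, |w t| ≤ 1)
    (x : ℕ → ℝ) (hx0 : x 0 = 0)
    (hxrec : ∀ t, x (t + 1) = x t + w t - Q (x t + w t)) :
    M * ((2 : ℝ) ^ R)⁻¹ = c ∧ ∀ t, |x t| ≤ c := by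
  have h2R : (2 : ℝ) ≤ (2 : ℝ) ^ R := by
    calc (2 : ℝ) = 2 ^ 1 := (pow_one 2).symm
    _ ≤ 2 ^ R := pow_le_pow_right₀ (by norm_num) hR
  have hsub : (1 : ℝ) ≤ (2 : ℝ) ^ R - 1 := by linarith
  have hpos : (0 : ℝ) < (2 : ℝ) ^ R - 1 := by linarith
  have hcpos : 0 < c := by rw [hc]; positivity
  have hfix : M * ((2 : ℝ) ^ R)⁻¹ = c := by
    rw [hM, hc]
    field_simp
    ring
  refine ⟨hfix, ?_⟩
  intro t
  induction t with
  | zero => rw [hx0]; simpa using hcpos.le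
  | succ n ih =>
    have hmem : x n + w n ∈ Set.Icc (-M) M := by
      have := abs_add_le (x n) (w n)
      have hwn := hw n
      have : |x n + w n| ≤ M := by rw [hM]; linarith
      exact abs_le.mp this
    have := hQ _ hmem
    rw [hxrec n]
    simpa [sub_eq_add_neg] using this
end
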